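/- arXiv:1805.11451 — 5 statements merged into one kernel-verified Lean document; each statement's English description precedes it below -/
import Mathlib

section
/- Let R be a ring in which every additive commutator lies in the center, let p be a prime and n ≥ 1, and let b ∈ R satisfy pⁿ·b = 0. Then b^(pⁿ) lies in the center of R. -/
/-! Since `[a, b]` commutes with `b`, the commutator `[a, b ^ m]` equals `m • [a, b] * b ^ (m - 1)`,
and `m • [a, b] = [a, m • b]` vanishes as soon as `m • b = 0`. -/

theorem mul_pow_succ_sub_pow_succ_mul {R : Type*} [Ring R] {a b : R}
    (hc : Commute b (a * b - b * a)) (k : ℕ) :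
    a * b ^ (k + 1) - b ^ (k + 1) * a = (k + 1) • ((a * b - b * a) * b ^ k) := by
  induction k with
  | zero => simp
  | succ k ih =>
    have hstep : a * b ^ (k + 2) - b ^ (k + 2) * a
        = (a * b ^ (k + 1) - b ^ (k + 1) * a) * b + b ^ (k + 1) * (a * b - b * a) := by
      simp only [pow_succ, mul_sub, sub_mul, mul_assoc]
      abel
    rw [hstep, ih, (hc.pow_left (k + 1)).eq, smul_mul_assoc, mul_assoc, ← pow_succ, ← succ_nsmul]

theorem pow_mem_center_of_nsmul_eq_zero {R : Type*} [Ring R] {b : R}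
    (h : ∀ a, a * b - b * a ∈ Subring.center R) {m : ℕ} (hm : m • b = 0) :
    b ^ m ∈ Subring.center R := by
  rw [Subring.mem_center_iff]
  intro a
  rcases m with _ | k
  · simp
  have hc : Commute b (a * b - b * a) := Subring.mem_center_iff.mp (h a) b
  have hcomm_torsion : (k + 1) • (a * b - b * a) = 0 := by
    rw [smul_sub, ← mul_smul_comm, ← smul_mul_assoc, hm, mul_zero, zero_mul, sub_zero]
  have hcomm := mul_pow_succ_sub_pow_succ_mul hc k
  rwa [← smul_mul_assoc, hcomm_torsion, zero_mul, sub_eq_zero] at hcomm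

theorem pow_central_of_commutators_central_general {R : Type*} [Ring R]
    (h : ∀ a b : R, a * b - b * a ∈ Subring.center R)
    (p n : ℕ) (b : R) (hb : (p ^ n) • b = 0) :
    b ^ (p ^ n) ∈ Subring.center R :=
  pow_mem_center_of_nsmul_eq_zero (fun a => h a b) hb

theorem pow_central_of_commutators_central {R : Type*} [Ring R]
    (h : ∀ a b : R, a * b - b * a ∈ Subring.center R)
    (p n : ℕ) (hp : p.Prime) (hn : 1 ≤ n) (b : R) (hb : (p ^ n) • b = 0) :
    b ^ (p ^ n) ∈ Subring.center R :=
  pow_central_of_commutators_central_general h p n b hb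
end

section
/- Let R be a finite ring with no nontrivial idempotents in which every nilpotent element is central, and let N be the ideal of nilpotent elements. Then every element of the quotient ring R/N is either zero or invertible, i.e., R/N is a finite division ring (hence a field). -/
/-- In a finite monoid, some positive power of every element is idempotent. -/
lemma exists_pow_idem {R : Type*} [Monoid R] [Finite R] (a : R) :
    ∃ n : ℕ, 1 ≤ n ∧ a ^ n * a ^ n = a ^ n := by
  obtain ⟨i, j, hne, hij⟩ := Finite.exists_ne_map_eq_of_infinite (fun n : ℕ => a ^ n)
  wlog hlt : i < j generalizing i j
  · exact this j i (Ne.symm hne) hij.symm (lt_of_le_of_ne (not_lt.mp hlt) (Ne.symm hne))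
  set d := j - i with hd
  have hd1 : 1 ≤ d := by omega
  have hji : j = i + d := by omega
  have step : ∀ k, i ≤ k → a ^ (k + d) = a ^ k := by
    intro k hk
    have h1 : a ^ k = a ^ (k - i) * a ^ i := by
      rw [← pow_add]; congr 1; omega
    have h2 : a ^ (k + d) = a ^ (k - i) * a ^ (i + d) := by
      rw [← pow_add]; congr 1; omega
    rw [h1, h2, ← hji, ← hij]
  have stab : ∀ t k, i ≤ k → a ^ (k + t * d) = a ^ k := by
    intro t
    induction t with
    | zero => simp
    | succ t ih =>
      intro k hk
      have h3 : k + (t + 1) * d = (k + d) + t * d := by ring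
      rw [h3, ih (k + d) (by omega), step k hk]
  refine ⟨(i + 1) * d, by nlinarith, ?_⟩
  rw [← pow_add]
  exact stab (i + 1) ((i + 1) * d) (by nlinarith)

theorem quotient_by_nilpotents_is_field {R : Type*} [Ring R] [Fintype R]
    (hidem : ∀ e : R, e * e = e → e = 0 ∨ e = 1)
    (hnil : ∀ x : R, IsNilpotent x → x ∈ Subring.center R)
    (N : TwoSidedIdeal R) (hN : ∀ x : R, x ∈ N ↔ IsNilpotent x) :
    (∀ y : N.ringCon.Quotient, y = 0 ∨ IsUnit y) ∧
      (∀ a b : N.ringCon.Quotient, a * b = b * a) := by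
  classical
  have hfin : Finite N.ringCon.Quotient := Quotient.finite _
  have key : ∀ y : N.ringCon.Quotient, y = 0 ∨ IsUnit y := by
    intro y
    obtain ⟨a, rfl⟩ := Quotient.mk''_surjective y
    obtain ⟨n, hn1, hnidem⟩ := exists_pow_idem a
    rcases hidem (a ^ n) hnidem with h0 | h1
    · left
      show (a : N.ringCon.Quotient) = 0
      rw [← RingCon.coe_zero]
      exact (RingCon.eq N.ringCon).mpr ((TwoSidedIdeal.mem_iff N a).mp ((hN a).mpr ⟨n, h0⟩))
    · right
      have hu : IsUnit a := by
        refine isUnit_iff_exists.mpr ⟨a ^ (n - 1), ?_, ?_⟩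
        · rw [← pow_succ']; rwa [show n - 1 + 1 = n by omega]
        · rw [← pow_succ]; rwa [show n - 1 + 1 = n by omega]
      exact hu.map N.ringCon.mk'
  refine ⟨key, ?_⟩
  by_cases hs : Subsingleton N.ringCon.Quotient
  · intro a b; exact Subsingleton.elim _ _
  · have : Nontrivial N.ringCon.Quotient := not_subsingleton_iff_nontrivial.mp hs
    have : NoZeroDivisors N.ringCon.Quotient := by
      constructor
      intro a b hab
      rcases key a with h | h
      · exact Or.inl h
      · exact Or.inr (by rwa [h.mul_right_eq_zero] at hab)
    have : IsDomain N.ringCon.Quotient := NoZeroDivisors.to_isDomain _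
    have : Fintype N.ringCon.Quotient := Fintype.ofFinite _
    letI : DivisionRing N.ringCon.Quotient := Fintype.divisionRingOfIsDomain _
    letI : Field N.ringCon.Quotient := littleWedderburn _
    exact fun a b => mul_comm a b
end

section
/- Let R be a finite ring in which every nilpotent element is central. Then the additive commutator ab − ba is central for all a, b ∈ R (i.e., [R,R] ⊆ Z(R)) whenever R has no nontrivial idempotents, since R modulo its nilradical is a field and hence commutative. -/
/-!
Some positive power of every element of a finite ring is idempotent, so without nontrivial
idempotents every element is nilpotent or a unit. Central nilpotents form a two-sided ideal `N`,
and then `R ⧸ N` has no zero divisors; being finite, it is a field by Wedderburn's little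
theorem. Hence `a * b - b * a ∈ N`, which is central.
-/

theorem exists_pos_isIdempotentElem_pow {M : Type*} [Monoid M] [Finite M] (x : M) :
    ∃ n, 0 < n ∧ IsIdempotentElem (x ^ n) := by
  obtain ⟨i, j, hij, hpow⟩ := Set.finite_univ.exists_lt_map_eq_of_forall_mem
    (f := fun k : ℕ => x ^ k) (fun _ => Set.mem_univ _)
  obtain ⟨d, rfl⟩ := Nat.exists_eq_add_of_lt hij
  have hper : Function.Periodic (fun k => x ^ (i + k)) (d + 1) := fun k => by
    simp only [add_comm k, ← add_assoc, pow_add, ← hpow]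
  refine ⟨(i + 1) * (d + 1), by positivity, ?_⟩
  obtain ⟨r, hr⟩ := Nat.exists_eq_add_of_le (show i ≤ (i + 1) * (d + 1) by nlinarith)
  rw [IsIdempotentElem, ← pow_add]
  nth_rw 1 [hr]
  rw [add_assoc]
  exact (hper.nat_mul (i + 1) r).trans (congrArg _ hr.symm)

theorem isNilpotent_or_isUnit_of_finite {M : Type*} [MonoidWithZero M] [Finite M]
    (hidem : ∀ e : M, e * e = e → e = 0 ∨ e = 1) (x : M) : IsNilpotent x ∨ IsUnit x := by
  obtain ⟨n, hn, hidem_pow⟩ := exists_pos_isIdempotentElem_pow x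
  exact (hidem _ hidem_pow).imp (fun h => ⟨n, h⟩) (IsUnit.of_pow_eq_one · hn.ne')

section CentralNilpotents

variable {R : Type*} [Ring R]

theorem isNilpotent_or_isNilpotent_of_isNilpotent_mul [Finite R]
    (hnil : ∀ x : R, IsNilpotent x → x ∈ Subring.center R)
    (hidem : ∀ e : R, e * e = e → e = 0 ∨ e = 1) {a b : R} (hab : IsNilpotent (a * b)) :
    IsNilpotent a ∨ IsNilpotent b := by
  refine (isNilpotent_or_isUnit_of_finite hidem a).imp id fun ⟨u, hu⟩ => ?_
  subst hu
  simpa using ((hnil _ hab).comm _).symm.isNilpotent_mul_left (x := ↑u⁻¹) hab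

def nilpotentIdeal (hnil : ∀ x : R, IsNilpotent x → x ∈ Subring.center R) : TwoSidedIdeal R :=
  .mk' {x | IsNilpotent x} .zero
    (fun hx hy => ((hnil _ hx).comm _).isNilpotent_add hx hy) IsNilpotent.neg
    (fun hy => ((hnil _ hy).comm _).symm.isNilpotent_mul_left hy)
    (fun hx => ((hnil _ hx).comm _).isNilpotent_mul_right hx)

theorem nilpotentIdeal_mk_eq_mk_iff (hnil : ∀ x : R, IsNilpotent x → x ∈ Subring.center R)
    {a b : R} :
    (nilpotentIdeal hnil).ringCon.mk' a = (nilpotentIdeal hnil).ringCon.mk' b ↔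
      IsNilpotent (a - b) := by
  rw [RingCon.coe_mk', RingCon.eq, TwoSidedIdeal.rel_iff, nilpotentIdeal, TwoSidedIdeal.mem_mk']
  rfl

theorem isDomain_quotient_nilpotentIdeal [Finite R] [Nontrivial R]
    (hnil : ∀ x : R, IsNilpotent x → x ∈ Subring.center R)
    (hidem : ∀ e : R, e * e = e → e = 0 ∨ e = 1) :
    IsDomain (nilpotentIdeal hnil).ringCon.Quotient := by
  set π := (nilpotentIdeal hnil).ringCon.mk'
  have hπ (a : R) : π a = 0 ↔ IsNilpotent a := by
    rw [← map_zero π, nilpotentIdeal_mk_eq_mk_iff, sub_zero]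
  have : Nontrivial (nilpotentIdeal hnil).ringCon.Quotient :=
    nontrivial_of_ne (π 1) 0 <| by rw [Ne, hπ]; exact not_isNilpotent_one
  refine @NoZeroDivisors.to_isDomain _ _ _ ⟨fun {x y} hxy => ?_⟩
  obtain ⟨a, rfl⟩ := RingCon.mk'_surjective _ x
  obtain ⟨b, rfl⟩ := RingCon.mk'_surjective _ y
  rw [← map_mul, hπ] at hxy
  rw [hπ, hπ]
  exact isNilpotent_or_isNilpotent_of_isNilpotent_mul hnil hidem hxy

theorem isNilpotent_mul_sub_mul [Finite R]
    (hnil : ∀ x : R, IsNilpotent x → x ∈ Subring.center R)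
    (hidem : ∀ e : R, e * e = e → e = 0 ∨ e = 1) (a b : R) : IsNilpotent (a * b - b * a) := by
  rcases subsingleton_or_nontrivial R with _ | _
  · exact ⟨1, Subsingleton.elim _ _⟩
  have := isDomain_quotient_nilpotentIdeal hnil hidem
  have := Finite.of_surjective _ (nilpotentIdeal hnil).ringCon.mk'_surjective
  rw [← nilpotentIdeal_mk_eq_mk_iff hnil, map_mul, map_mul]
  exact (Finite.isDomain_to_isField _).mul_comm _ _

end CentralNilpotents

theorem commutators_central_of_nilpotents_central {R : Type*} [Ring R] [Fintype R]
    (hnil : ∀ x : R, IsNilpotent x → x ∈ Subring.center R)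
    (hidem : ∀ e : R, e * e = e → e = 0 ∨ e = 1) :
    ∀ a b : R, a * b - b * a ∈ Subring.center R :=
  fun a b => hnil _ (isNilpotent_mul_sub_mul hnil hidem a b)
end

section
/- Let R be a finite ring such that every x ∈ R satisfies x^(n(x)) = x for some integer n(x) > 1 (depending on x). Then R is commutative. -/
/-!
An element with `x ^ n = x`, `n > 1`, cannot be a nonzero nilpotent, so `R` is reduced. A finite
ring is Artinian, and the Jacobson radical of an Artinian ring is nilpotent, hence zero in a
reduced ring; so `R` is semisimple, and by Artin–Wedderburn a product of matrix rings `Mₙ(D)`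
over division rings. Reducedness forces `n ≤ 1`, since a matrix unit `E₁₂` squares to zero, and
each `D` is finite, hence a field by Wedderburn's little theorem.
-/

theorem isReduced_of_forall_exists_pow_eq_self {M : Type*} [MonoidWithZero M]
    (h : ∀ x : M, ∃ n, 1 < n ∧ x ^ n = x) : IsReduced M := by
  refine (isReduced_iff_pow_one_lt 2 one_lt_two).mpr fun x hx ↦ ?_
  obtain ⟨n, hn, hxn⟩ := h x
  rw [← hxn, ← Nat.sub_add_cancel hn, pow_add, hx, mul_zero]

theorem IsReduced.of_pi {ι : Type*} {M : ι → Type*} [DecidableEq ι]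
    [∀ i, MonoidWithZero (M i)] [IsReduced (∀ i, M i)] (i : ι) : IsReduced (M i) := by
  refine (isReduced_iff_pow_one_lt 2 one_lt_two).mpr fun x hx ↦ Pi.single_injective i ?_
  rw [Pi.single_zero]
  refine (isReduced_iff_pow_one_lt 2 one_lt_two).mp ‹_› _ ?_
  rw [sq, ← Pi.single_mul, ← sq, hx, Pi.single_zero]

theorem Ideal.eq_bot_of_isNilpotent_of_isReduced {R : Type*} [Semiring R] [IsReduced R]
    {I : Ideal R} (hI : IsNilpotent I) : I = ⊥ := by
  obtain ⟨n, hn⟩ := hI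
  refine eq_bot_iff.mpr fun x hx ↦ (Submodule.mem_bot R).mpr (IsReduced.eq_zero x ⟨n, ?_⟩)
  simpa [hn] using Ideal.pow_mem_pow hx n

theorem isSemisimpleRing_of_isArtinianRing_of_isReduced {R : Type*} [Ring R] [IsArtinianRing R]
    [IsReduced R] : IsSemisimpleRing R :=
  IsArtinianRing.isSemisimpleRing_iff_jacobson.mpr
    (Ideal.eq_bot_of_isNilpotent_of_isReduced IsSemiprimaryRing.isNilpotent)

namespace Matrix

variable {n D : Type*} [Fintype n] [DecidableEq n]

theorem subsingleton_of_isReduced [Semiring D] [Nontrivial D] [IsReduced (Matrix n n D)] :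
    Subsingleton n := by
  by_contra hn
  obtain ⟨i, j, hij⟩ := not_subsingleton_iff_nontrivial.mp hn |>.exists_pair_ne
  have : IsNilpotent (single i j (1 : D)) :=
    ⟨2, by rw [sq, single_mul_single_of_ne _ i j i hij.symm]⟩
  exact one_ne_zero (by simpa using congr_fun₂ this.eq_zero i j : (1 : D) = 0)

theorem mul_comm_of_isReduced_of_finite [DivisionRing D] [Finite (Matrix n n D)]
    [IsReduced (Matrix n n D)] (x y : Matrix n n D) : x * y = y * x := by
  have := subsingleton_of_isReduced (n := n) (D := D)
  ext i j
  obtain rfl := Subsingleton.elim i j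
  have : Finite D :=
    Finite.of_injective (fun a : D ↦ of fun _ _ : n ↦ a) fun _ _ h ↦ congr_fun₂ h i i
  simp [mul_apply, Fintype.sum_subsingleton _ i, mul_comm]

end Matrix

theorem mul_comm_of_finite_of_isReduced {R : Type*} [Ring R] [Finite R] [IsReduced R] (a b : R) :
    a * b = b * a := by
  have : IsSemisimpleRing R := isSemisimpleRing_of_isArtinianRing_of_isReduced
  obtain ⟨n, D, d, _, -, ⟨e⟩⟩ := IsSemisimpleRing.exists_ringEquiv_pi_matrix_divisionRing R
  let M i := Matrix (Fin (d i)) (Fin (d i)) (D i)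
  have : IsReduced (∀ i, M i) := isReduced_of_injective e.symm e.symm.injective
  have : Finite (∀ i, M i) := Finite.of_equiv _ e.toEquiv
  refine e.injective (funext fun i ↦ ?_)
  have : IsReduced (M i) := IsReduced.of_pi i
  have : Finite (M i) := Finite.of_injective _ (Pi.single_injective (M := M) i)
  simp only [map_mul, Pi.mul_apply]
  exact Matrix.mul_comm_of_isReduced_of_finite _ _

theorem finite_jacobson_commutative {R : Type*} [Ring R] [Fintype R]
    (h : ∀ x : R, ∃ n : ℕ, 1 < n ∧ x ^ n = x) :
    ∀ a b : R, a * b = b * a :=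
  have := isReduced_of_forall_exists_pow_eq_self h
  mul_comm_of_finite_of_isReduced
end

section
/- Let R be an associative ring with unity and n > 1. If a matrix A ∈ Mₙ(R) commutes with every nilpotent matrix in Mₙ(R), then A lies in the center of Mₙ(R); in particular A is a scalar matrix c·I with c in the center of R. -/
/-!
Every off-diagonal matrix unit `r • E i j` squares to zero. Commuting with those with `r = 1`
forces `A` to be a scalar matrix `c`, and comparing the `(i, j)` entries of `A (r • E i j)` and
`(r • E i j) A` gives `c r = r c`.
-/

namespace Matrix

variable {ι α : Type*} [Fintype ι] [DecidableEq ι] [Semiring α]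

theorem isNilpotent_single_of_ne {i j : ι} (hij : i ≠ j) (r : α) :
    IsNilpotent (single i j r) :=
  ⟨2, by rw [pow_two, single_mul_single_of_ne (c := r) i j i hij.symm]⟩

theorem mem_center_of_forall_commute_single [Nontrivial ι] {M : Matrix ι ι α}
    (hM : ∀ i j, i ≠ j → ∀ r : α, Commute (single i j r) M) :
    M ∈ Set.center (Matrix ι ι α) := by
  obtain ⟨c, rfl⟩ := mem_range_scalar_of_commute_single fun i j hij => hM i j hij 1
  obtain ⟨i, j, hij⟩ := exists_pair_ne ι
  have hc : c ∈ Set.center α := Semigroup.mem_center_iff.mpr fun r => by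
    simpa [hij] using congr($(hM i j hij r) i j)
  rw [center_eq_scalar_image]
  exact ⟨c, hc, rfl⟩

theorem mem_center_of_forall_commute_isNilpotent [Nontrivial ι] {M : Matrix ι ι α}
    (hM : ∀ B : Matrix ι ι α, IsNilpotent B → Commute B M) :
    M ∈ Set.center (Matrix ι ι α) :=
  mem_center_of_forall_commute_single fun _ _ hij r => hM _ (isNilpotent_single_of_ne hij r)

end Matrix

theorem matrix_commuting_with_nilpotents_is_central {R : Type*} [Ring R]
    (n : ℕ) (hn : 1 < n) (A : Matrix (Fin n) (Fin n) R)
    (h : ∀ B : Matrix (Fin n) (Fin n) R, IsNilpotent B → A * B = B * A) :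
    A ∈ Subring.center (Matrix (Fin n) (Fin n) R) ∧
      ∃ c ∈ Subring.center R, A = c • (1 : Matrix (Fin n) (Fin n) R) := by
  have : Nontrivial (Fin n) := Fin.nontrivial_iff_two_le.mpr hn
  have hA : A ∈ Subring.center (Matrix (Fin n) (Fin n) R) :=
    Matrix.mem_center_of_forall_commute_isNilpotent fun B hB => (h B hB).symm
  refine ⟨hA, ?_⟩
  rw [Matrix.subringCenter_eq_scalar_map] at hA
  obtain ⟨c, hc, rfl⟩ := hA
  exact ⟨c, hc, by rw [Matrix.scalar_apply, Matrix.smul_one_eq_diagonal]⟩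
end
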